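/- Zolotarev's first problem for n = 7 at parameter t = −21: for every choice of real numbers c0, c1, c2, c3, c4, c5, the polynomial P(x) = x^7 − 7s·x^6 + c5·x^5 + c4·x^4 + c3·x^3 + c2·x^2 + c1·x + c0 satisfies sup over x ∈ [−1,1] of |P(x)| ≥ 1/b7; moreover the monic polynomial Z(x)/b7 has exactly this form (i.e. b6/b7 = −7s) and attains equality: sup over x ∈ [−1,1] of |Z(x)/b7| = 1/b7. -/

import Mathlib

noncomputable section

def b0 : ℝ := (5236829509 - 598896224 * Real.sqrt 6) / 6591796875

def b1 : ℝ :=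
  -(16 / 6591796875) * Real.sqrt (2 * (1174132032293998751 + 484070220858892414 * Real.sqrt 6))

def b2 : ℝ := -(8 / 2197265625) * (1876889773 + 537098572 * Real.sqrt 6)

def b3 : ℝ :=
  (16 / 6591796875) * Real.sqrt (2 * (56229826406521238759 + 22960487256932311726 * Real.sqrt 6))

def b4 : ℝ := (8 / 6591796875) * (13748181869 + 5603740016 * Real.sqrt 6)

def b5 : ℝ :=
  -(32 / 2197265625) * Real.sqrt (2 * (4907729982259476719 + 2003572376153817166 * Real.sqrt 6))

def b6 : ℝ := -(256 / 6591796875) * (299877839 + 122424446 * Real.sqrt 6)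

def b7 : ℝ :=
  (1024 / 6591796875) * Real.sqrt (2 * (11553696783009431 + 4716776960201434 * Real.sqrt 6))

/-- The septic normalized proper Zolotarev polynomial at parameter t = −21. -/
def Z (x : ℝ) : ℝ :=
  b0 + b1 * x + b2 * x ^ 2 + b3 * x ^ 3 + b4 * x ^ 4 + b5 * x ^ 5 + b6 * x ^ 6 + b7 * x ^ 7

def s : ℝ := (1 / 28) * Real.sqrt ((-24764015 + 10110318 * Real.sqrt 6) / 142)

/-! With `ρ = √(4√6 - 5)`, a root of `ρ⁴ + 10ρ² - 71`, all coefficients of `Z` lie in `ℚ(ρ)`, and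
`1 - Z = (γ₁ - b₇x) G₁²`, `1 + Z = (1 - x²)(γ₂ - b₇x) G₂²` for a cubic `G₁`, a quadratic `G₂` and
constants `γ₁, γ₂ > b₇`. So `|Z| ≤ 1` on `[-1, 1]`, and `Z` takes the alternating values
`-1, 1, -1, 1, -1, 1, -1` at `-1`, at the interlaced roots of `G₁` and `G₂`, and at `1`.
If a monic septic with the same `x⁶`-coefficient as `Z / b₇` had norm `< 1 / b₇` on `[-1, 1]`,
its difference with `Z / b₇`, of degree at most `5`, would change sign six times. -/

open Polynomial Set

theorem exists_root_of_mul_neg {f : ℝ → ℝ} (hf : Continuous f) {a b : ℝ} (hab : a ≤ b)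
    (h : f a * f b < 0) : ∃ c ∈ Ioo a b, f c = 0 := by
  rcases mul_neg_iff.1 h with ⟨ha, hb⟩ | ⟨ha, hb⟩
  · exact intermediate_value_Ioo' hab hf.continuousOn ⟨hb, ha⟩
  · exact intermediate_value_Ioo hab hf.continuousOn ⟨ha, hb⟩

theorem Polynomial.le_natDegree_of_sign_changes {p : ℝ[X]} {n : ℕ} {x : Fin (n + 1) → ℝ}
    (hx : StrictMono x) (hp : ∀ i : Fin n, p.eval (x i.castSucc) * p.eval (x i.succ) < 0) :
    n ≤ p.natDegree := by
  choose z hz hz0 using fun i ↦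
    exists_root_of_mul_neg p.continuous (hx i.castSucc_lt_succ).le (hp i)
  have hz_mono : StrictMono z := fun i j hij ↦
    calc z i < x i.succ := (hz i).2
      _ ≤ x j.castSucc := hx.monotone (Fin.succ_le_castSucc_iff.2 hij)
      _ < z j := (hz j).1
  by_contra! hlt
  have hp0 : p = 0 :=
    eq_zero_of_natDegree_lt_card_of_eval_eq_zero p hz_mono.injective hz0 (by simpa using hlt)
  simpa [hp0] using hp ⟨0, by omega⟩

theorem exists_le_abs_of_alternation {f g : ℝ → ℝ} {p : ℝ[X]} {n : ℕ} {E : ℝ}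
    {x : Fin (n + 2) → ℝ} (hx : StrictMono x) (hfg : ∀ t, f t - g t = p.eval t)
    (hp : p.natDegree ≤ n) (hE : ∀ i, |f (x i)| = E)
    (halt : ∀ i : Fin (n + 1), f (x i.succ) = -f (x i.castSucc)) :
    ∃ i, E ≤ |g (x i)| := by
  by_contra! hg
  have hsign : ∀ i : Fin (n + 1), p.eval (x i.castSucc) * p.eval (x i.succ) < 0 := by
    intro i
    -- `|g| < E = |f|` at the nodes, so `f - g` has the sign of `f` there
    rw [← hfg, ← hfg, halt]
    have hu := hE i.castSucc
    obtain ⟨ha₁, ha₂⟩ := abs_lt.1 (hg i.castSucc)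
    obtain ⟨hb₁, hb₂⟩ := abs_lt.1 (hg i.succ)
    rcases abs_cases (f (x i.castSucc)) with ⟨hfu, -⟩ | ⟨hfu, -⟩ <;> rw [hfu] at hu <;>
      nlinarith
  have := Polynomial.le_natDegree_of_sign_changes hx hsign
  omega

theorem le_sSup_abs_of_alternation {f g : ℝ → ℝ} {p : ℝ[X]} {n : ℕ} {E a b : ℝ}
    {x : Fin (n + 2) → ℝ} (hx : StrictMono x) (hxI : ∀ i, x i ∈ Icc a b)
    (hg : ContinuousOn g (Icc a b)) (hfg : ∀ t, f t - g t = p.eval t) (hp : p.natDegree ≤ n)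
    (hE : ∀ i, |f (x i)| = E) (halt : ∀ i : Fin (n + 1), f (x i.succ) = -f (x i.castSucc)) :
    E ≤ sSup ((fun t ↦ |g t|) '' Icc a b) := by
  obtain ⟨i, hi⟩ := exists_le_abs_of_alternation hx hfg hp hE halt
  exact hi.trans (le_csSup (isCompact_Icc.bddAbove_image hg.abs) ⟨x i, hxI i, rfl⟩)

def ρ : ℝ := √(4 * √6 - 5)

theorem ρ_sq : ρ ^ 2 = 4 * √6 - 5 := by
  have h6 : √6 ^ 2 = 6 := Real.sq_sqrt (by norm_num)
  exact Real.sq_sqrt (by nlinarith [Real.sqrt_nonneg 6])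

theorem sqrt_six_eq : √6 = (ρ ^ 2 + 5) / 4 := by
  rw [ρ_sq]; ring

theorem ρ_pow_four : ρ ^ 4 = 71 - 10 * ρ ^ 2 := by
  have h6 : √6 ^ 2 = 6 := Real.sq_sqrt (by norm_num)
  rw [show ρ ^ 4 = (ρ ^ 2) ^ 2 by ring, ρ_sq]
  linear_combination 16 * h6

theorem ρ_bounds : 2.19042 < ρ ∧ ρ < 2.19043 := by
  have h := ρ_pow_four
  have hρ : 0 ≤ ρ := Real.sqrt_nonneg _
  have hsq : 2.19042 ^ 2 < ρ ^ 2 ∧ ρ ^ 2 < 2.19043 ^ 2 := by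
    constructor <;> nlinarith [sq_nonneg ρ]
  constructor <;> nlinarith

theorem ρ_pos : 0 < ρ := lt_trans (by norm_num) ρ_bounds.1

theorem b1_eq : b1 = -4 * ρ * (3034656511 + 194372971 * ρ ^ 2) / 6591796875 := by
  have h : √(2 * (1174132032293998751 + 484070220858892414 * √6)) =
      ρ * (3034656511 + 194372971 * ρ ^ 2) / 4 := by
    rw [Real.sqrt_eq_iff_eq_sq (by positivity) (by have := ρ_pos; positivity), sqrt_six_eq]
    grind [ρ_pow_four]
  rw [b1, h]; ring

theorem b3_eq : b3 = 4 * ρ * (20721401333 + 1389561113 * ρ ^ 2) / 6591796875 := by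
  have h : √(2 * (56229826406521238759 + 22960487256932311726 * √6)) =
      ρ * (20721401333 + 1389561113 * ρ ^ 2) / 4 := by
    rw [Real.sqrt_eq_iff_eq_sq (by positivity) (by have := ρ_pos; positivity), sqrt_six_eq]
    grind [ρ_pow_four]
  rw [b3, h]; ring

theorem b5_eq : b5 = -8 * ρ * (6109974793 + 412888573 * ρ ^ 2) / 2197265625 := by
  have h : √(2 * (4907729982259476719 + 2003572376153817166 * √6)) =
      ρ * (6109974793 + 412888573 * ρ ^ 2) / 4 := by
    rw [Real.sqrt_eq_iff_eq_sq (by positivity) (by have := ρ_pos; positivity), sqrt_six_eq]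
    grind [ρ_pow_four]
  rw [b5, h]; ring

theorem b7_eq : b7 = 256 * ρ * (296454749 + 20033489 * ρ ^ 2) / 6591796875 := by
  have h : √(2 * (11553696783009431 + 4716776960201434 * √6)) =
      ρ * (296454749 + 20033489 * ρ ^ 2) / 4 := by
    rw [Real.sqrt_eq_iff_eq_sq (by positivity) (by have := ρ_pos; positivity), sqrt_six_eq]
    grind [ρ_pow_four]
  rw [b7, h]; ring

theorem s_eq : s = ρ * (4487 * ρ ^ 2 - 20805) / 15904 := by
  have hρ := ρ_bounds
  have h : √((-24764015 + 10110318 * √6) / 142) = ρ * (4487 * ρ ^ 2 - 20805) / 568 := by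
    rw [Real.sqrt_eq_iff_eq_sq (by rw [sqrt_six_eq]; nlinarith) (by nlinarith), sqrt_six_eq]
    grind [ρ_pow_four]
  rw [s, h]; ring

theorem b6_eq : b6 = -7 * s * b7 := by
  rw [b6, sqrt_six_eq, s_eq, b7_eq]
  grind [ρ_pow_four]

theorem b7_pos : 0 < b7 := by
  rw [b7_eq]; have := ρ_pos; positivity

theorem b7_lt : b7 < 34 := by
  have := ρ_bounds
  rw [b7_eq]; nlinarith

def G₁ (x : ℝ) : ℝ :=
  x ^ 3 + ρ * (9651 - 1953 * ρ ^ 2) / 2272 * x ^ 2 + (3750 * ρ ^ 2 / 71 - 72159 / 284) * x +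
    ρ * (407951 * ρ ^ 2 - 1972317) / 322624

def G₂ (x : ℝ) : ℝ :=
  x ^ 2 + ρ * (7979 - 1609 * ρ ^ 2) / 2272 * x + (2464 * ρ ^ 2 / 71 - 47345 / 284)

theorem one_sub_Z (x : ℝ) :
    1 - Z x = ((205882432896 + 13912893056 * ρ ^ 2) / 6591796875 - b7 * x) * G₁ x ^ 2 := by
  simp only [Z, b0, b1_eq, b2, b3_eq, b4, b5_eq, b6, b7_eq, sqrt_six_eq, G₁]
  grind [ρ_pow_four]

theorem one_add_Z (x : ℝ) :
    1 + Z x = (1 - x ^ 2) * ((198990239104 + 13447138944 * ρ ^ 2) / 6591796875 - b7 * x) *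
      G₂ x ^ 2 := by
  simp only [Z, b0, b1_eq, b2, b3_eq, b4, b5_eq, b6, b7_eq, sqrt_six_eq, G₂]
  grind [ρ_pow_four]

theorem abs_Z_le_one {x : ℝ} (hx : x ∈ Icc (-1) 1) : |Z x| ≤ 1 := by
  obtain ⟨hx₁, hx₂⟩ := hx
  have hρ := ρ_bounds
  have hb := b7_pos
  have hbx : b7 * x ≤ 34 := by nlinarith [b7_lt]
  have h₁ : 0 ≤ 1 - Z x := by
    rw [one_sub_Z]; exact mul_nonneg (by nlinarith) (sq_nonneg _)
  have h₂ : 0 ≤ 1 + Z x := by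
    rw [one_add_Z]; exact mul_nonneg (mul_nonneg (by nlinarith) (by nlinarith)) (sq_nonneg _)
  exact abs_le.2 ⟨by linarith, by linarith⟩

theorem Z_one : Z 1 = -1 := by
  linarith [one_add_Z 1]

theorem Z_neg_one : Z (-1) = -1 := by
  linarith [one_add_Z (-1)]

theorem Z_eq_one_of_G₁_eq_zero {x : ℝ} (h : G₁ x = 0) : Z x = 1 := by
  have := one_sub_Z x
  rw [h] at this
  linarith

theorem Z_eq_neg_one_of_G₂_eq_zero {x : ℝ} (h : G₂ x = 0) : Z x = -1 := by
  have := one_add_Z x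
  rw [h] at this
  linarith

theorem G₁_signs : G₁ (-1) < 0 ∧ 0 < G₁ (-3 / 4) ∧ 0 < G₁ (-1 / 2) ∧ G₁ 0 < 0 ∧
    G₁ (1 / 2) < 0 ∧ 0 < G₁ 1 := by
  have := ρ_bounds
  simp only [G₁]
  refine ⟨?_, ?_, ?_, ?_, ?_, ?_⟩ <;> nlinarith

theorem G₂_signs : 0 < G₂ (-3 / 4) ∧ G₂ (-1 / 2) < 0 ∧ G₂ 0 < 0 ∧ 0 < G₂ (1 / 2) := by
  have := ρ_bounds
  simp only [G₂]
  refine ⟨?_, ?_, ?_, ?_⟩ <;> nlinarith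

theorem exists_alternation : ∃ x : Fin 7 → ℝ, StrictMono x ∧ (∀ i, x i ∈ Icc (-1) 1) ∧
    (∀ i, |Z (x i)| = 1) ∧ ∀ i : Fin 6, Z (x i.succ) = -Z (x i.castSucc) := by
  obtain ⟨h₁a, h₁b, h₁c, h₁d, h₁e, h₁f⟩ := G₁_signs
  obtain ⟨h₂a, h₂b, h₂c, h₂d⟩ := G₂_signs
  have hG₁ : Continuous G₁ := by unfold G₁; fun_prop
  have hG₂ : Continuous G₂ := by unfold G₂; fun_prop
  obtain ⟨m₁, ⟨hm₁, hm₁'⟩, hZm₁⟩ :=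
    exists_root_of_mul_neg hG₁ (by norm_num) (mul_neg_of_neg_of_pos h₁a h₁b)
  obtain ⟨n₁, ⟨hn₁, hn₁'⟩, hZn₁⟩ :=
    exists_root_of_mul_neg hG₂ (by norm_num) (mul_neg_of_pos_of_neg h₂a h₂b)
  obtain ⟨m₂, ⟨hm₂, hm₂'⟩, hZm₂⟩ :=
    exists_root_of_mul_neg hG₁ (by norm_num) (mul_neg_of_pos_of_neg h₁c h₁d)
  obtain ⟨n₂, ⟨hn₂, hn₂'⟩, hZn₂⟩ :=
    exists_root_of_mul_neg hG₂ (by norm_num) (mul_neg_of_neg_of_pos h₂c h₂d)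
  obtain ⟨m₃, ⟨hm₃, hm₃'⟩, hZm₃⟩ :=
    exists_root_of_mul_neg hG₁ (by norm_num) (mul_neg_of_neg_of_pos h₁e h₁f)
  replace hZm₁ := Z_eq_one_of_G₁_eq_zero hZm₁
  replace hZm₂ := Z_eq_one_of_G₁_eq_zero hZm₂
  replace hZm₃ := Z_eq_one_of_G₁_eq_zero hZm₃
  replace hZn₁ := Z_eq_neg_one_of_G₂_eq_zero hZn₁
  replace hZn₂ := Z_eq_neg_one_of_G₂_eq_zero hZn₂
  refine ⟨![-1, m₁, n₁, m₂, n₂, m₃, 1], Fin.strictMono_iff_lt_succ.2 ?_, ?_, ?_, ?_⟩ <;>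
    intro i <;> fin_cases i
  all_goals
    simp only [Fin.reduceFinMk, Fin.reduceSucc, Fin.reduceCastSucc, Matrix.cons_val, mem_Icc,
      Z_one, Z_neg_one, hZm₁, hZm₂, hZm₃, hZn₁, hZn₂, abs_neg, abs_one, neg_neg]
  all_goals first | linarith | exact ⟨by linarith, by linarith⟩

/-- Zolotarev's first problem for n = 7 at parameter t = −21: every monic
septic with second leading coefficient −7s has uniform norm at least 1/b₇ on [−1,1];
moreover Z/b₇ is such a polynomial and attains this bound. -/
theorem stmt15 :
    (∀ c0 c1 c2 c3 c4 c5 : ℝ,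
      1 / b7 ≤ sSup ((fun x : ℝ =>
        |x ^ 7 - 7 * s * x ^ 6 + c5 * x ^ 5 + c4 * x ^ 4 + c3 * x ^ 3 + c2 * x ^ 2 +
          c1 * x + c0|) '' Set.Icc (-1 : ℝ) 1)) ∧
    b6 / b7 = -7 * s ∧
    sSup ((fun x : ℝ => |Z x / b7|) '' Set.Icc (-1 : ℝ) 1) = 1 / b7 := by
  have hb := b7_pos
  obtain ⟨x, hx, hxI, hZx, halt⟩ := exists_alternation
  refine ⟨fun c0 c1 c2 c3 c4 c5 ↦ ?_, by rw [div_eq_iff hb.ne', b6_eq], ?_⟩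
  · refine le_sSup_abs_of_alternation (f := fun t ↦ Z t / b7)
      (p := C (b0 / b7 - c0) + C (b1 / b7 - c1) * X + C (b2 / b7 - c2) * X ^ 2 +
        C (b3 / b7 - c3) * X ^ 3 + C (b4 / b7 - c4) * X ^ 4 + C (b5 / b7 - c5) * X ^ 5)
      hx hxI (by fun_prop) (fun t ↦ ?_) (by compute_degree!)
      (fun i ↦ by rw [abs_div, hZx, abs_of_pos hb]) (fun i ↦ by rw [halt, neg_div])
    simp only [Z, b6_eq, eval_add, eval_mul, eval_pow, eval_C, eval_X]
    field_simp
    ring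
  · refine IsGreatest.csSup_eq ⟨⟨1, by norm_num, by simp [Z_one, abs_div, abs_of_pos hb]⟩, ?_⟩
    rintro _ ⟨t, ht, rfl⟩
    simp only [abs_div, abs_of_pos hb]
    exact div_le_div_of_nonneg_right (abs_Z_le_one ht) hb.le
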